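/- arXiv:1107.3854 — 3 statements merged into one kernel-verified Lean document; each statement's English description precedes it below -/
import Mathlib

section
/- Suppose m ≥ 3, θ ∈ [0,1], V = (V_1,…,V_m) has distribution ν^{(m)}_θ, and S,T are nonempty disjoint sets with S ∪ T = {1,…,m}. Then α(σ(V_i, i∈S), σ(V_i, i∈T)) = θ/4, i.e. 4·α = θ. -/
open MeasureTheory ProbabilityTheory

/-- The measure `ν_θ` on `{-1,1}^m` (viewed inside `Fin m → ℤ`), giving mass
`(1+θ)/2^m` to each point of `{-1,1}^m` with coordinate product `1` and
`(1-θ)/2^m` to each point of `{-1,1}^m` with coordinate product `-1`. -/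
noncomputable def nu (m : ℕ) (θ : ℝ) : MeasureTheory.Measure (Fin m → ℤ) :=
  MeasureTheory.Measure.sum (fun x : Fin m → ℤ =>
    (if ∀ i, x i = 1 ∨ x i = -1 then
        ENNReal.ofReal (if ∏ i, x i = 1 then (1 + θ) / 2 ^ m else (1 - θ) / 2 ^ m)
      else 0) • MeasureTheory.Measure.dirac x)

noncomputable def alphaDep {Ω : Type*} (F : MeasurableSpace Ω) (μ : @MeasureTheory.Measure Ω F)
    (A B : MeasurableSpace Ω) : ℝ :=
  sSup {r : ℝ | ∃ a b : Set Ω, MeasurableSet[A] a ∧ MeasurableSet[B] b ∧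
    r = |(μ (a ∩ b)).toReal - (μ a).toReal * (μ b).toReal|}

noncomputable def rhoDep {Ω : Type*} (F : MeasurableSpace Ω) (μ : @MeasureTheory.Measure Ω F)
    (A B : MeasurableSpace Ω) : ℝ :=
  sSup {r : ℝ | ∃ f g : Ω → ℝ, Measurable[A] f ∧ Measurable[B] g ∧
    MeasureTheory.MemLp f 2 μ ∧ MeasureTheory.MemLp g 2 μ ∧
    0 < ProbabilityTheory.variance f μ ∧ 0 < ProbabilityTheory.variance g μ ∧
    r = |(∫ ω, f ω * g ω ∂μ - (∫ ω, f ω ∂μ) * ∫ ω, g ω ∂μ) /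
        (Real.sqrt (ProbabilityTheory.variance f μ) *
         Real.sqrt (ProbabilityTheory.variance g μ))|}

/-!
Under the uniform measure on `{-1,1}^m` the blocks of coordinates indexed by `S` and by `T` are
independent, and `ν_θ` has density `1 + θ ε_S ε_T` with respect to it, where the Walsh character
`ε_K x = ∏_{i ∈ K} x_i` (`walsh K`) has mean zero when `K ≠ ∅`. Expanding the density, for `A`
depending only on the `S`-coordinates and `B` only on the `T`-coordinates,
`ν_θ(A ∩ B) - ν_θ(A) ν_θ(B) = θ E[1_A ε_S] E[1_B ε_T]`. Each factor lies in `[-1/2, 1/2]`, and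
`A = {ε_S = 1}`, `B = {ε_T = 1}` attain both bounds.
-/

open Finset
open Fintype (piFinset mem_piFinset)
open scoped BigOperators

lemma DependsOn.mul {ι β : Type*} {α : ι → Type*} [Mul β] {f g : (Π i, α i) → β} {s : Set ι}
    (hf : DependsOn f s) (hg : DependsOn g s) : DependsOn (fun x => f x * g x) s :=
  fun _ _ h => congrArg₂ (· * ·) (hf h) (hg h)

section Independence

variable {ι α : Type*} [Fintype ι] [DecidableEq ι] {t : ι → Finset α} {S T : Finset ι}
  {f g : (ι → α) → ℝ}

theorem expect_piFinset_mul_of_dependsOn (hST : Disjoint S T) (hf : DependsOn f S)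
    (hg : DependsOn g T) :
    𝔼 x ∈ piFinset t, f x * g x = (𝔼 x ∈ piFinset t, f x) * 𝔼 x ∈ piFinset t, g x := by
  obtain hP | hP := (piFinset t).eq_empty_or_nonempty
  · simp [hP]
  have hinv (x y : ι → α) : S.piecewise (S.piecewise x y) (S.piecewise y x) = x := by
    ext i; by_cases hi : i ∈ S <;> simp [hi]
  -- `(x, y) ↦ (x', y')`, exchanging the `S`-coordinates, is an involution with `f x' = f x` and
  -- `g x' = g y`.
  have hswap : 𝔼 p ∈ piFinset t ×ˢ piFinset t, f p.1 * g p.2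
      = 𝔼 p ∈ piFinset t ×ˢ piFinset t, f p.1 * g p.1 := by
    refine expect_nbij' (fun p => (S.piecewise p.1 p.2, S.piecewise p.2 p.1))
      (fun p => (S.piecewise p.1 p.2, S.piecewise p.2 p.1)) ?_ ?_ ?_ ?_ ?_ <;>
      simp only [mem_product, mem_piFinset, Prod.forall, Prod.mk.injEq]
    iterate 2 exact fun x y h => ⟨fun i => by by_cases hi : i ∈ S <;> simp [hi, h.1 i, h.2 i],
        fun i => by by_cases hi : i ∈ S <;> simp [hi, h.1 i, h.2 i]⟩
    iterate 2 exact fun x y _ => ⟨hinv x y, hinv y x⟩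
    refine fun x y _ => congrArg₂ (· * ·) (hf fun i hi => ?_) (hg fun i hi => ?_)
    · exact (piecewise_eq_of_mem _ _ _ hi).symm
    · exact (piecewise_eq_of_notMem _ _ _ (disjoint_right.1 hST hi)).symm
  rw [expect_mul_expect, ← expect_product' (f := fun x y => f x * g y), hswap,
    expect_product' (f := fun x _ => f x * g x)]
  simp [expect_const hP]

end Independence

section Walsh

variable {ι : Type*} {S T K : Finset ι} {x : ι → ℤ}

def walsh (K : Finset ι) (x : ι → ℤ) : ℝ := ∏ i ∈ K, (x i : ℝ)

lemma walsh_dependsOn (K : Finset ι) : DependsOn (walsh K) K :=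
  fun _ _ h => prod_congr rfl fun i hi => by rw [h i hi]

lemma walsh_union [DecidableEq ι] (hST : Disjoint S T) (x : ι → ℤ) :
    walsh (S ∪ T) x = walsh S x * walsh T x :=
  prod_union hST

variable [Fintype ι] [DecidableEq ι]

def signVectors (ι : Type*) [Fintype ι] [DecidableEq ι] : Finset (ι → ℤ) :=
  piFinset fun _ => {1, -1}

lemma card_signVectors : #(signVectors ι) = 2 ^ Fintype.card ι := by
  simp [signVectors]

lemma signVectors_nonempty : (signVectors ι).Nonempty :=
  ⟨1, by simp [signVectors]⟩

lemma abs_walsh (hx : x ∈ signVectors ι) (K : Finset ι) : |walsh K x| = 1 := by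
  simp only [signVectors, mem_piFinset, mem_insert, mem_singleton] at hx
  rw [walsh, abs_prod]
  exact prod_eq_one fun i _ => by rcases hx i with h | h <;> simp [h]

lemma expect_walsh (hK : K.Nonempty) : 𝔼 x ∈ signVectors ι, walsh K x = 0 := by
  obtain ⟨j, hj⟩ := hK
  have hsum : ∑ x ∈ signVectors ι, walsh K x = 0 := by
    simp_rw [signVectors, walsh, ← Fintype.prod_ite_mem K]
    rw [sum_prod_piFinset _ fun i (a : ℤ) => if i ∈ K then (a : ℝ) else 1]
    exact prod_eq_zero (mem_univ j) (by simp [hj])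
  rw [expect_eq_sum_div_card, hsum, zero_div]

lemma abs_expect_mul_walsh_le (hK : K.Nonempty) {f : (ι → ℤ) → ℝ}
    (hf : ∀ x, f x ∈ Set.Icc 0 1) : |𝔼 x ∈ signVectors ι, f x * walsh K x| ≤ 1 / 2 := by
  have hcenter : 𝔼 x ∈ signVectors ι, f x * walsh K x
      = 𝔼 x ∈ signVectors ι, (f x - 1 / 2) * walsh K x := by
    simp_rw [sub_mul, expect_sub_distrib, ← mul_expect, expect_walsh hK, mul_zero, sub_zero]
  rw [hcenter]
  refine (abs_expect_le _ _).trans (expect_le signVectors_nonempty fun x hx => ?_)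
  rw [abs_mul, abs_walsh hx, mul_one, abs_le]
  constructor <;> linarith [hf x |>.1, hf x |>.2]

lemma expect_indicator_walsh_eq_one_mul_walsh (hK : K.Nonempty) :
    𝔼 x ∈ signVectors ι, {y | walsh K y = 1}.indicator 1 x * walsh K x = 1 / 2 := by
  have hpt : ∀ x ∈ signVectors ι,
      {y | walsh K y = 1}.indicator 1 x * walsh K x = (1 + walsh K x) / 2 := by
    intro x hx
    rcases abs_eq (zero_le_one' ℝ) |>.1 (abs_walsh hx K) with h | h <;> norm_num [h]
  rw [expect_congr rfl hpt, ← expect_div, expect_add_distrib, expect_walsh hK,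
    expect_const signVectors_nonempty]
  norm_num

end Walsh

section Covariance

variable {ι : Type*} [Fintype ι] [DecidableEq ι] {S T : Finset ι}

def nuDensity (θ : ℝ) (x : ι → ℤ) : ℝ := 1 + θ * walsh univ x

lemma expect_signVectors_mul_of_dependsOn (hST : Disjoint S T) {f g : (ι → ℤ) → ℝ}
    (hf : DependsOn f S) (hg : DependsOn g T) :
    𝔼 x ∈ signVectors ι, f x * g x
      = (𝔼 x ∈ signVectors ι, f x) * 𝔼 x ∈ signVectors ι, g x :=
  expect_piFinset_mul_of_dependsOn hST hf hg

theorem expect_nuDensity_mul_sub_mul (θ : ℝ) (hS : S.Nonempty) (hT : T.Nonempty)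
    (hST : Disjoint S T) (hunion : S ∪ T = univ) {f g : (ι → ℤ) → ℝ}
    (hf : DependsOn f S) (hg : DependsOn g T) :
    𝔼 x ∈ signVectors ι, f x * g x * nuDensity θ x
        - (𝔼 x ∈ signVectors ι, f x * nuDensity θ x) * 𝔼 x ∈ signVectors ι, g x * nuDensity θ x
      = θ * (𝔼 x ∈ signVectors ι, f x * walsh S x) * 𝔼 x ∈ signVectors ι, g x * walsh T x := by
  have hsplit (h : (ι → ℤ) → ℝ) : 𝔼 x ∈ signVectors ι, h x * nuDensity θ x
      = 𝔼 x ∈ signVectors ι, h x + θ * 𝔼 x ∈ signVectors ι, h x * walsh S x * walsh T x := by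
    simp_rw [nuDensity, ← hunion, walsh_union hST, mul_add, mul_one, expect_add_distrib,
      mul_expect]
    congr! 2 with x
    ring
  have hfS := hf.mul (walsh_dependsOn S)
  have hgT := hg.mul (walsh_dependsOn T)
  have hf0 : 𝔼 x ∈ signVectors ι, f x * walsh S x * walsh T x = 0 := by
    rw [expect_signVectors_mul_of_dependsOn hST hfS (walsh_dependsOn T), expect_walsh hT,
      mul_zero]
  have hg0 : 𝔼 x ∈ signVectors ι, g x * walsh S x * walsh T x = 0 := by
    simp_rw [mul_comm (g _), mul_assoc]
    rw [expect_signVectors_mul_of_dependsOn hST (walsh_dependsOn S) hgT, expect_walsh hS,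
      zero_mul]
  have hfg : 𝔼 x ∈ signVectors ι, f x * g x * walsh S x * walsh T x
      = (𝔼 x ∈ signVectors ι, f x * walsh S x) * 𝔼 x ∈ signVectors ι, g x * walsh T x := by
    rw [← expect_signVectors_mul_of_dependsOn hST hfS hgT]
    congr! 1 with x
    ring
  rw [hsplit, hsplit, hsplit, hf0, hg0, hfg, expect_signVectors_mul_of_dependsOn hST hf hg]
  ring

lemma nuDensity_nonneg {θ : ℝ} (hθ : |θ| ≤ 1) {x : ι → ℤ} (hx : x ∈ signVectors ι) :
    0 ≤ nuDensity θ x := by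
  have := neg_abs_le (θ * walsh univ x)
  rw [abs_mul, abs_walsh hx, mul_one] at this
  rw [nuDensity]
  linarith

end Covariance

section Nu

variable {m : ℕ} {θ : ℝ}

lemma nu_apply_toReal (hθ : |θ| ≤ 1) (A : Set (Fin m → ℤ)) :
    (nu m θ A).toReal = 𝔼 x ∈ signVectors (Fin m), A.indicator 1 x * nuDensity θ x := by
  have hA : MeasurableSet A := A.to_countable.measurableSet
  have hweight {x} (hx : x ∈ signVectors (Fin m)) :
      (if ∏ i, x i = 1 then (1 + θ) / 2 ^ m else (1 - θ) / 2 ^ m) = nuDensity θ x / 2 ^ m := by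
    have hcast : walsh univ x = ((∏ i, x i : ℤ) : ℝ) := by simp [walsh]
    rcases abs_eq zero_le_one |>.1 (abs_walsh hx univ) with h | h <;> rw [hcast] at h
    · have h' : ∏ i, x i = 1 := by exact_mod_cast h
      simp [nuDensity, hcast, h']
    · have h' : ∏ i, x i = -1 := by exact_mod_cast h
      simp [nuDensity, hcast, h', sub_eq_add_neg]
  rw [nu, Measure.sum_apply _ hA]
  simp only [Measure.smul_apply, Measure.dirac_apply' _ hA, smul_eq_mul]
  rw [tsum_eq_sum (s := signVectors (Fin m)) fun x hx => by
      rw [if_neg (by simpa [signVectors] using hx), zero_mul],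
    sum_congr rfl fun x hx => by rw [if_pos (by simpa [signVectors] using hx), hweight hx],
    ENNReal.toReal_sum fun x _ => ENNReal.mul_ne_top ENNReal.ofReal_ne_top
      (by by_cases hxA : x ∈ A <;> simp [hxA]), expect_eq_sum_div_card, card_signVectors,
    Fintype.card_fin, sum_div]
  refine sum_congr rfl fun x hx => ?_
  rw [ENNReal.toReal_mul,
    ENNReal.toReal_ofReal (div_nonneg (nuDensity_nonneg hθ hx) (by positivity))]
  by_cases hxA : x ∈ A <;> simp [hxA]

lemma nu_inter_sub_mul (hθ : |θ| ≤ 1) {S T : Finset (Fin m)}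
    (hS : S.Nonempty) (hT : T.Nonempty) (hST : Disjoint S T) (hunion : S ∪ T = univ)
    {A B : Set (Fin m → ℤ)} (hA : DependsOn (A.indicator (1 : (Fin m → ℤ) → ℝ)) S)
    (hB : DependsOn (B.indicator (1 : (Fin m → ℤ) → ℝ)) T) :
    (nu m θ (A ∩ B)).toReal - (nu m θ A).toReal * (nu m θ B).toReal
      = θ * (𝔼 x ∈ signVectors (Fin m), A.indicator 1 x * walsh S x)
          * 𝔼 x ∈ signVectors (Fin m), B.indicator 1 x * walsh T x := by
  simp_rw [nu_apply_toReal hθ, Set.inter_indicator_one, Pi.mul_apply]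
  exact expect_nuDensity_mul_sub_mul θ hS hT hST hunion hA hB

end Nu

section CylinderEvents

variable {ι : Type*} {X : ι → Type*} [mX : ∀ i, MeasurableSpace (X i)]

lemma iSup_comap_apply_eq_comap_cylinderEvents {Ω : Type*} (V : Ω → ∀ i, X i)
    (Δ : Finset ι) :
    ⨆ i ∈ Δ, (mX i).comap (fun ω => V ω i) = (cylinderEvents (Δ : Set ι)).comap V := by
  simp_rw [cylinderEvents, MeasurableSpace.comap_iSup, MeasurableSpace.comap_comp]
  rfl

lemma cylinderEvents_le_piFinset (Δ : Finset ι) :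
    cylinderEvents (X := X) (Δ : Set ι) ≤ Filtration.piFinset Δ := by
  rw [Filtration.piFinset_eq_comap_restrict]
  exact iSup₂_le fun i hi => ((measurable_pi_apply (⟨i, hi⟩ : (Δ : Set ι))).comp
    (comap_measurable ((Δ : Set ι).domRestrict (π := X)))).comap_le

lemma dependsOn_indicator_of_measurableSet_cylinderEvents {M : Type*} [Zero M]
    [MeasurableSpace M] [MeasurableSingletonClass M] {Δ : Finset ι} {A : Set (∀ i, X i)}
    (hA : MeasurableSet[cylinderEvents Δ] A) (c : M) :
    DependsOn (A.indicator fun _ => c) Δ :=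
  (measurable_const.indicator (cylinderEvents_le_piFinset Δ A hA)).dependsOn_of_piFinset

end CylinderEvents

lemma measurableSet_walsh_eq_one {ι : Type*} (K : Finset ι) :
    MeasurableSet[cylinderEvents K] {x : ι → ℤ | walsh K x = 1} :=
  (Finset.measurable_prod K fun _ hi =>
    (measurable_of_countable (Int.cast : ℤ → ℝ)).comp (measurable_cylinderEvent_apply hi))
    (measurableSet_singleton 1)

theorem stmt9_general {Ω : Type*} {F : MeasurableSpace Ω} (μ : Measure Ω) [IsProbabilityMeasure μ]
    (m : ℕ) (θ : ℝ) (hθ : θ ∈ Set.Icc (0 : ℝ) 1)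
    (V : Ω → Fin m → ℤ) (hV : Measurable V) (hlaw : Measure.map V μ = nu m θ)
    (S T : Finset (Fin m)) (hSne : S.Nonempty) (hTne : T.Nonempty)
    (hdisj : Disjoint S T) (hunion : S ∪ T = Finset.univ) :
    alphaDep F μ (⨆ i ∈ S, MeasurableSpace.comap (fun ω => V ω i) inferInstance)
      (⨆ i ∈ T, MeasurableSpace.comap (fun ω => V ω i) inferInstance) = θ / 4 := by
  obtain ⟨hθ0, hθ1⟩ := hθ
  have hpreimage (A : Set (Fin m → ℤ)) : μ (V ⁻¹' A) = nu m θ A := by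
    rw [← hlaw, Measure.map_apply hV A.to_countable.measurableSet]
  have hcov {A B : Set (Fin m → ℤ)} (hA : MeasurableSet[cylinderEvents S] A)
      (hB : MeasurableSet[cylinderEvents T] B) :
      |(μ (V ⁻¹' A ∩ V ⁻¹' B)).toReal - (μ (V ⁻¹' A)).toReal * (μ (V ⁻¹' B)).toReal|
        = θ * |𝔼 x ∈ signVectors (Fin m), A.indicator 1 x * walsh S x|
            * |𝔼 x ∈ signVectors (Fin m), B.indicator 1 x * walsh T x| := by
    rw [← Set.preimage_inter, hpreimage, hpreimage, hpreimage,
      nu_inter_sub_mul (abs_le.2 ⟨by linarith, hθ1⟩) hSne hTne hdisj hunion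
        (dependsOn_indicator_of_measurableSet_cylinderEvents hA 1)
        (dependsOn_indicator_of_measurableSet_cylinderEvents hB 1),
      abs_mul, abs_mul, abs_of_nonneg hθ0]
  have hindicator (C : Set (Fin m → ℤ)) (x : Fin m → ℤ) :
      C.indicator (1 : (Fin m → ℤ) → ℝ) x ∈ Set.Icc 0 1 := by
    by_cases hx : x ∈ C <;> simp [hx]
  rw [alphaDep, iSup_comap_apply_eq_comap_cylinderEvents,
    iSup_comap_apply_eq_comap_cylinderEvents]
  refine IsGreatest.csSup_eq ⟨⟨_, _, ⟨_, measurableSet_walsh_eq_one S, rfl⟩,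
    ⟨_, measurableSet_walsh_eq_one T, rfl⟩, ?_⟩, ?_⟩
  · rw [hcov (measurableSet_walsh_eq_one S) (measurableSet_walsh_eq_one T),
      expect_indicator_walsh_eq_one_mul_walsh hSne, expect_indicator_walsh_eq_one_mul_walsh hTne]
    rw [abs_of_pos one_half_pos]
    ring
  · rintro _ ⟨_, _, ⟨A, hA, rfl⟩, ⟨B, hB, rfl⟩, rfl⟩
    rw [hcov hA hB]
    calc _ ≤ θ * (1 / 2) * (1 / 2) := by
          gcongr
          exacts [abs_expect_mul_walsh_le hSne (hindicator A),
            abs_expect_mul_walsh_le hTne (hindicator B)]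
      _ = θ / 4 := by ring

theorem stmt9 {Ω : Type*} {F : MeasurableSpace Ω} (μ : Measure Ω) [IsProbabilityMeasure μ]
    (m : ℕ) (hm : 3 ≤ m) (θ : ℝ) (hθ : θ ∈ Set.Icc (0 : ℝ) 1)
    (V : Ω → Fin m → ℤ) (hV : Measurable V) (hlaw : Measure.map V μ = nu m θ)
    (S T : Finset (Fin m)) (hSne : S.Nonempty) (hTne : T.Nonempty)
    (hdisj : Disjoint S T) (hunion : S ∪ T = Finset.univ) :
    alphaDep F μ (⨆ i ∈ S, MeasurableSpace.comap (fun ω => V ω i) inferInstance)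
      (⨆ i ∈ T, MeasurableSpace.comap (fun ω => V ω i) inferInstance) = θ / 4 :=
  stmt9_general μ m θ hθ V hV hlaw S T hSne hTne hdisj hunion
end

section
/- Let d ∈ ℕ. Suppose Y := (Y_k, k ∈ ℤ^d) is a random field, and for each u ∈ ℤ^d, Y^{(u)} := (Y^{(u)}_j, j ∈ ℤ^d) is a random field with the same distribution on ℝ^{ℤ^d} as Y, with the fields (Y^{(u)}, u ∈ ℤ^d) independent of each other. Let f : ℝ^{ℤ^d} → ℝ be Borel and define X_k := f((Y^{(k−j)}_j, j ∈ ℤ^d)) for k ∈ ℤ^d. Then the random field X := (X_k, k ∈ ℤ^d) is strictly stationary. -/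
open MeasureTheory ProbabilityTheory

/-- A random field `(X_k, k ∈ ℤ^d)` is strictly stationary if every shift of it
has the same joint distribution as the field itself. -/
def StrictlyStationary {Ω : Type*} [MeasurableSpace Ω] (μ : MeasureTheory.Measure Ω)
    {d : ℕ} (X : (Fin d → ℤ) → Ω → ℝ) : Prop :=
  ∀ i : Fin d → ℤ,
    MeasureTheory.Measure.map (fun ω (k : Fin d → ℤ) => X (k + i) ω) μ =
      MeasureTheory.Measure.map (fun ω (k : Fin d → ℤ) => X k ω) μ

/-!
Write `Z := (Y^{(u)}, u ∈ ℤ^d)`. The field `X` is a fixed measurable function `G` of `Z`, and its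
shift by `i` is the same `G` applied to the reindexed family `(Y^{(u+i)}, u ∈ ℤ^d)`. Since the
`Y^{(u)}` are i.i.d., both families have the product law `⊗_u law(Y)`, so the two images under
`G` agree.
-/

theorem ProbabilityTheory.iIndepFun.map_precomp_eq_of_map_eq {Ω ι β : Type*}
    [MeasurableSpace Ω] [MeasurableSpace β] {μ : Measure Ω} {X : ι → Ω → β}
    (hX : ∀ i, Measurable (X i)) (hlaw : ∀ i j, μ.map (X i) = μ.map (X j))
    (hindep : iIndepFun X μ) {g : ι → ι} (hg : g.Injective) :
    μ.map (fun ω i ↦ X (g i) ω) = μ.map (fun ω i ↦ X i ω) := by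
  rw [(hindep.precomp hg).map_fun_eq_infinitePi_map (fun i ↦ hX (g i)),
    hindep.map_fun_eq_infinitePi_map hX]
  congr 1
  funext i
  exact hlaw (g i) i

theorem stmt14_general {Ω : Type*} [MeasurableSpace Ω] (μ : Measure Ω)
    (d : ℕ)
    (Y : Ω → (Fin d → ℤ) → ℝ)
    (Y' : (Fin d → ℤ) → Ω → (Fin d → ℤ) → ℝ)
    (hY' : ∀ u, Measurable (Y' u))
    (hsame : ∀ u, Measure.map (Y' u) μ = Measure.map Y μ)
    (hindep : iIndep (fun u : Fin d → ℤ =>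
      MeasurableSpace.comap (Y' u) inferInstance) μ)
    (f : ((Fin d → ℤ) → ℝ) → ℝ) (hf : Measurable f) :
    StrictlyStationary μ (fun k ω => f (fun j => Y' (k - j) ω j)) := by
  intro i
  let G : ((Fin d → ℤ) → (Fin d → ℤ) → ℝ) → (Fin d → ℤ) → ℝ := fun z k ↦ f fun j ↦ z (k - j) j
  have hG : Measurable G := by fun_prop
  have hshift : (fun ω k ↦ f fun j ↦ Y' (k + i - j) ω j) = G ∘ fun ω u ↦ Y' (u + i) ω := by
    funext ω k
    simp only [G, Function.comp_apply, sub_add_eq_add_sub]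
  have hlaw : μ.map (fun ω u ↦ Y' (u + i) ω) = μ.map (fun ω u ↦ Y' u ω) :=
    ((iIndepFun_iff_iIndep _ _ _).2 hindep).map_precomp_eq_of_map_eq hY'
      (fun u v ↦ (hsame u).trans (hsame v).symm) (add_left_injective i)
  change μ.map (fun ω k ↦ f fun j ↦ Y' (k + i - j) ω j) = μ.map (G ∘ fun ω u ↦ Y' u ω)
  rw [hshift, ← Measure.map_map hG (by fun_prop), ← Measure.map_map hG (by fun_prop), hlaw]

theorem stmt14 {Ω : Type*} [MeasurableSpace Ω] (μ : Measure Ω) [IsProbabilityMeasure μ]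
    (d : ℕ) (hd : 0 < d)
    (Y : Ω → (Fin d → ℤ) → ℝ) (hY : Measurable Y)
    (Y' : (Fin d → ℤ) → Ω → (Fin d → ℤ) → ℝ)
    (hY' : ∀ u, Measurable (Y' u))
    (hsame : ∀ u, Measure.map (Y' u) μ = Measure.map Y μ)
    (hindep : iIndep (fun u : Fin d → ℤ =>
      MeasurableSpace.comap (Y' u) inferInstance) μ)
    (f : ((Fin d → ℤ) → ℝ) → ℝ) (hf : Measurable f) :
    StrictlyStationary μ (fun k ω => f (fun j => Y' (k - j) ω j)) :=
  stmt14_general μ d Y Y' hY' hsame hindep f hf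
end

section
/- Let X be a real-valued random variable with distribution function F(x) := P(X ≤ x), let G(x) := lim_{y→x−} F(y), and let V be uniformly distributed on [0,1] and independent of X. Define U := G(X) + V·[F(X) − G(X)]. Then U is uniformly distributed on [0,1], and X = F^{−1}(U) almost surely, where F^{−1}(u) := inf{x ∈ ℝ : F(x) ≥ u}. -/
/-!
`U` is the distributional transform of `X`. For `0 < t < 1` let `a` be the `t`-quantile of `F`,
so that `G a ≤ t ≤ F a`. Almost surely `U < t` holds exactly when `X < a`, or `X = a` and `V`
falls in an interval of length `(t - G a) / (F a - G a)`; by independence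
`P(U < t) = G a + (F a - G a) * (t - G a) / (F a - G a) = t`, so `U` is uniform.

Since `U ≤ F X` and `U` is uniform, `P(F X ≤ F q) ≤ F q = P(X ≤ q)`, hence almost surely
`F` is strictly smaller than `F X` to the left of `X`. As `V > 0` almost surely, this makes `X`
the least `x` with `U ≤ F x`.
-/

open MeasureTheory ProbabilityTheory Set Filter Topology Function

noncomputable def distributionalTransform (f : ℝ → ℝ) (x v : ℝ) : ℝ :=
  leftLim f x + v * (f x - leftLim f x)

namespace Monotone

variable {f : ℝ → ℝ}

lemma measurable_distributionalTransform {α : Type*} [MeasurableSpace α] {X V : α → ℝ}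
    (hf : Monotone f) (hX : Measurable X) (hV : Measurable V) :
    Measurable fun ω => distributionalTransform f (X ω) (V ω) :=
  (hf.leftLim.measurable.comp hX).add
    (hV.mul ((hf.measurable.comp hX).sub (hf.leftLim.measurable.comp hX)))

lemma leftLim_le_distributionalTransform (hf : Monotone f) {x v : ℝ} (hv : 0 ≤ v) :
    leftLim f x ≤ distributionalTransform f x v := by
  have := hf.leftLim_le (le_refl x)
  unfold distributionalTransform
  nlinarith

lemma distributionalTransform_le (hf : Monotone f) {x v : ℝ} (hv : v ≤ 1) :
    distributionalTransform f x v ≤ f x := by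
  have := hf.leftLim_le (le_refl x)
  unfold distributionalTransform
  nlinarith

lemma distributionalTransform_lt_iff (hf : Monotone f) {a t x v : ℝ} (hv : v ∈ Icc (0 : ℝ) 1)
    (hlt : ∀ y < a, f y < t) (hle : t ≤ f a) :
    distributionalTransform f x v < t ↔
      x < a ∨ x = a ∧ distributionalTransform f a v < t := by
  rcases lt_trichotomy x a with hxa | rfl | hax
  · simp [hxa, (hf.distributionalTransform_le hv.2).trans_lt (hlt x hxa)]
  · simp
  · have : t ≤ distributionalTransform f x v :=
      hle.trans ((hf.le_leftLim hax).trans (hf.leftLim_le_distributionalTransform hv.1))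
    simp [hax.not_gt, hax.ne', this.not_gt]

lemma lt_distributionalTransform (hf : Monotone f) {x y v : ℝ} (hv : 0 < v) (hyx : y < x)
    (hlt : f y < f x) : f y < distributionalTransform f x v := by
  rcases (hf.leftLim_le (le_refl x)).lt_or_eq with hjump | hcont
  · calc f y ≤ leftLim f x := hf.le_leftLim hyx
      _ < distributionalTransform f x v := by
        unfold distributionalTransform
        nlinarith
  · simpa [distributionalTransform, hcont] using hlt

end Monotone

lemma StieltjesFunction.isLeast_sInf_le (f : StieltjesFunction ℝ) {t : ℝ}
    (hlt : ∃ x, f x < t) (hle : ∃ x, t ≤ f x) :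
    IsLeast {x | t ≤ f x} (sInf {x | t ≤ f x}) := by
  obtain ⟨x₀, hx₀⟩ := hlt
  have hbdd : BddBelow {x | t ≤ f x} :=
    ⟨x₀, fun x hx => le_of_not_gt fun hxx₀ => (hx.trans (f.mono hxx₀.le)).not_gt hx₀⟩
  refine ⟨?_, fun x hx => csInf_le hbdd hx⟩
  have hright : ∀ᶠ x in 𝓝[>] sInf {x | t ≤ f x}, t ≤ f x := by
    filter_upwards [self_mem_nhdsWithin] with x hx
    obtain ⟨y, hy, hyx⟩ := exists_lt_of_csInf_lt hle hx
    exact (show t ≤ f y from hy).trans (f.mono hyx.le)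
  exact ge_of_tendsto ((f.right_continuous _).mono Ioi_subset_Ici_self) hright

instance isProbabilityMeasure_volume_restrict_Icc :
    IsProbabilityMeasure (volume.restrict (Icc (0 : ℝ) 1)) :=
  ⟨by simp⟩

lemma volume_restrict_Icc_Iio {s : ℝ} (hs : s ≤ 1) :
    volume.restrict (Icc (0 : ℝ) 1) (Iio s) = ENNReal.ofReal s := by
  have : Iio s ∩ Icc 0 1 = Ico 0 s := by
    ext v
    simp only [mem_inter_iff, mem_Iio, mem_Icc, mem_Ico]
    constructor
    · rintro ⟨hvs, hv₀, -⟩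
      exact ⟨hv₀, hvs⟩
    · rintro ⟨hv₀, hvs⟩
      exact ⟨hvs, hv₀, by linarith⟩
  rw [Measure.restrict_apply measurableSet_Iio, this, Real.volume_Ico, sub_zero]

lemma measure_Iic_eq_of_measure_Iio {ρ : Measure ℝ} [IsProbabilityMeasure ρ]
    (h : ∀ t ∈ Ioo (0 : ℝ) 1, ρ (Iio t) = ENNReal.ofReal t) (c : ℝ) :
    ρ (Iic c) = ENNReal.ofReal (min c 1) := by
  have hofReal (p : ℝ) : Tendsto ENNReal.ofReal (𝓝 p) (𝓝 (ENNReal.ofReal p)) :=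
    ENNReal.continuous_ofReal.tendsto p
  apply le_antisymm
  · rcases le_or_gt 1 c with hc | hc
    · simpa [min_eq_right hc] using prob_le_one
    · have hmax : ENNReal.ofReal (max c 0) = ENNReal.ofReal (min c 1) := by
        rw [min_eq_left hc.le, ENNReal.ofReal_max]
        simp
      rw [← hmax]
      refine ge_of_tendsto ((hofReal _).mono_left (nhdsWithin_le_nhds (s := Ioi (max c 0)))) ?_
      filter_upwards [Ioo_mem_nhdsGT (max_lt hc one_pos)] with s hs
      rw [← h s ⟨(le_max_right _ _).trans_lt hs.1, hs.2⟩]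
      exact measure_mono (Iic_subset_Iio.2 ((le_max_left _ _).trans_lt hs.1))
  · rcases le_or_gt c 0 with hc | hc
    · simp [ENNReal.ofReal_eq_zero.2 ((min_le_left _ _).trans hc)]
    · refine le_of_tendsto ((hofReal _).mono_left (nhdsWithin_le_nhds (s := Iio (min c 1)))) ?_
      filter_upwards [Ioo_mem_nhdsLT (lt_min hc one_pos)] with s hs
      rw [← h s ⟨hs.1, hs.2.trans_le (min_le_right _ _)⟩]
      exact measure_mono (Iio_subset_Iic_self.trans
        (Iic_subset_Iic.2 (hs.2.le.trans (min_le_left _ _))))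

lemma eq_volume_restrict_Icc_of_measure_Iio {ρ : Measure ℝ} [IsProbabilityMeasure ρ]
    (h : ∀ t ∈ Ioo (0 : ℝ) 1, ρ (Iio t) = ENNReal.ofReal t) :
    ρ = volume.restrict (Icc 0 1) :=
  Measure.ext_of_Iic _ _ fun c => by
    rw [measure_Iic_eq_of_measure_Iio h,
      measure_Iic_eq_of_measure_Iio (fun t ht => volume_restrict_Icc_Iio ht.2.le)]

lemma StieltjesFunction.measure_singleton_mul_volume_distributionalTransform_lt
    (f : StieltjesFunction ℝ) {a t : ℝ} (hle : t ≤ f a) :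
    f.measure {a} * volume.restrict (Icc 0 1) {v | distributionalTransform f a v < t} =
      ENNReal.ofReal (t - leftLim f a) := by
  rw [f.measure_singleton]
  rcases (sub_nonneg.2 (f.mono.leftLim_le (le_refl a))).eq_or_lt with hjump | hjump
  · simp [← hjump, ENNReal.ofReal_eq_zero.2 (show t - leftLim f a ≤ 0 by linarith)]
  · have hslice : {v | distributionalTransform f a v < t} =
        Iio ((t - leftLim f a) / (f a - leftLim f a)) := by
      ext v
      simp only [mem_ofPred_eq, mem_Iio, lt_div_iff₀ hjump, distributionalTransform]
      constructor <;> intro <;> linarith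
    rw [hslice, volume_restrict_Icc_Iio ((div_le_one hjump).2 (by linarith)),
      ← ENNReal.ofReal_mul hjump.le, mul_div_cancel₀ _ hjump.ne']

namespace ProbabilityTheory

lemma measure_Iio_eq_ofReal_leftLim_cdf (ν : Measure ℝ) [IsProbabilityMeasure ν] (x : ℝ) :
    ν (Iio x) = ENNReal.ofReal (leftLim (cdf ν) x) := by
  simpa [measure_cdf] using (cdf ν).measure_Iio (tendsto_cdf_atBot ν) x

lemma isLeast_sInf_le_cdf (ν : Measure ℝ) [IsProbabilityMeasure ν] {t : ℝ}
    (ht : t ∈ Ioo (0 : ℝ) 1) :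
    IsLeast {x | t ≤ cdf ν x} (sInf {x | t ≤ cdf ν x}) :=
  (cdf ν).isLeast_sInf_le ((tendsto_cdf_atBot ν).eventually (gt_mem_nhds ht.1)).exists
    (((tendsto_cdf_atTop ν).eventually (lt_mem_nhds ht.2)).mono fun _ h => h.le).exists

variable {Ω : Type*} [MeasurableSpace Ω] {μ : Measure Ω} {X V : Ω → ℝ}

lemma ae_mem_Ioc_of_map_eq_volume_restrict_Icc (hV : Measurable V)
    (hVunif : μ.map V = volume.restrict (Icc 0 1)) :
    ∀ᵐ ω ∂μ, V ω ∈ Ioc (0 : ℝ) 1 := by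
  refine ae_of_ae_map hV.aemeasurable ?_
  rw [hVunif, ← Measure.restrict_congr_set Ioc_ae_eq_Icc]
  exact ae_restrict_mem measurableSet_Ioc

lemma measure_distributionalTransform_cdf_lt [IsProbabilityMeasure μ] (hX : Measurable X)
    (hV : Measurable V) (hVunif : μ.map V = volume.restrict (Icc 0 1))
    (hindep : IndepFun X V μ) {t : ℝ} (ht : t ∈ Ioo (0 : ℝ) 1) :
    μ {ω | distributionalTransform (cdf (μ.map X)) (X ω) (V ω) < t} = ENNReal.ofReal t := by
  set ν := μ.map X
  have : IsProbabilityMeasure ν := Measure.isProbabilityMeasure_map hX.aemeasurable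
  set F := cdf ν
  obtain ⟨hle, hleast⟩ := isLeast_sInf_le_cdf ν ht
  set a := sInf {x | t ≤ F x}
  have hlt : ∀ y < a, F y < t := fun y hy => lt_of_not_ge fun h => (hleast h).not_gt hy
  have hleft : leftLim F a ≤ t :=
    le_of_tendsto (F.mono.tendsto_leftLim a)
      (eventually_nhdsWithin_of_forall fun y hy => (hlt y hy).le)
  set W := {v | distributionalTransform F a v < t}
  have hW : MeasurableSet W :=
    measurableSet_lt (F.mono.measurable_distributionalTransform measurable_const measurable_id)
      measurable_const
  have hsplit : {ω | distributionalTransform F (X ω) (V ω) < t} =ᵐ[μ]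
      (X ⁻¹' Iio a ∪ X ⁻¹' {a} ∩ V ⁻¹' W : Set Ω) := by
    filter_upwards [ae_mem_Ioc_of_map_eq_volume_restrict_Icc hV hVunif] with ω hω
    exact propext (F.mono.distributionalTransform_lt_iff (Ioc_subset_Icc_self hω) hlt hle)
  have hdisj : Disjoint (X ⁻¹' Iio a) (X ⁻¹' {a} ∩ V ⁻¹' W) :=
    Disjoint.mono_right inter_subset_left
      ((disjoint_singleton_right.2 (lt_irrefl a) : Disjoint (Iio a) {a}).preimage X)
  have hatom := F.measure_singleton_mul_volume_distributionalTransform_lt hle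
  rw [measure_cdf] at hatom
  rw [measure_congr hsplit,
    measure_union hdisj ((hX (measurableSet_singleton a)).inter (hV hW)),
    hindep.measure_inter_preimage_eq_mul _ _ (measurableSet_singleton a) hW,
    ← Measure.map_apply hX measurableSet_Iio,
    ← Measure.map_apply hX (measurableSet_singleton a), ← Measure.map_apply hV hW, hVunif,
    measure_Iio_eq_ofReal_leftLim_cdf, hatom,
    ← ENNReal.ofReal_add ((cdf_nonneg ν _).trans (F.mono.le_leftLim (sub_one_lt a)))
      (sub_nonneg.2 hleft), add_sub_cancel]

lemma map_distributionalTransform_cdf [IsProbabilityMeasure μ] (hX : Measurable X)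
    (hV : Measurable V) (hVunif : μ.map V = volume.restrict (Icc 0 1)) (hindep : IndepFun X V μ) :
    μ.map (fun ω => distributionalTransform (cdf (μ.map X)) (X ω) (V ω)) =
      volume.restrict (Icc 0 1) := by
  have hmeas := (cdf (μ.map X)).mono.measurable_distributionalTransform hX hV
  have := Measure.isProbabilityMeasure_map (μ := μ) hmeas.aemeasurable
  refine eq_volume_restrict_Icc_of_measure_Iio fun t ht => ?_
  rw [Measure.map_apply hmeas measurableSet_Iio]
  exact measure_distributionalTransform_cdf_lt hX hV hVunif hindep ht

lemma measure_cdf_comp_le_le [IsProbabilityMeasure μ] (hX : Measurable X) (hV : Measurable V)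
    (hVunif : μ.map V = volume.restrict (Icc 0 1)) (hindep : IndepFun X V μ) (c : ℝ) :
    μ {ω | cdf (μ.map X) (X ω) ≤ c} ≤ ENNReal.ofReal c := by
  set F := cdf (μ.map X)
  have hmeas := F.mono.measurable_distributionalTransform hX hV
  calc μ {ω | F (X ω) ≤ c}
      ≤ μ ((fun ω => distributionalTransform F (X ω) (V ω)) ⁻¹' Iic c) := by
        refine measure_mono_ae ?_
        filter_upwards [ae_mem_Ioc_of_map_eq_volume_restrict_Icc hV hVunif] with ω hω h
        exact (F.mono.distributionalTransform_le hω.2).trans h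
    _ = ENNReal.ofReal (min c 1) := by
        rw [← Measure.map_apply hmeas measurableSet_Iic,
          map_distributionalTransform_cdf hX hV hVunif hindep,
          measure_Iic_eq_of_measure_Iio fun t ht => volume_restrict_Icc_Iio ht.2.le]
    _ ≤ ENNReal.ofReal c := ENNReal.ofReal_le_ofReal (min_le_left _ _)

lemma ae_cdf_lt_cdf_of_lt [IsProbabilityMeasure μ] (hX : Measurable X) (hV : Measurable V)
    (hVunif : μ.map V = volume.restrict (Icc 0 1)) (hindep : IndepFun X V μ) :
    ∀ᵐ ω ∂μ, ∀ y < X ω, cdf (μ.map X) y < cdf (μ.map X) (X ω) := by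
  set F := cdf (μ.map X)
  have := Measure.isProbabilityMeasure_map (μ := μ) hX.aemeasurable
  have hflat (q : ℝ) : ∀ᵐ ω ∂μ, q < X ω → F q < F (X ω) := by
    set B := {ω | q < X ω ∧ F (X ω) ≤ F q}
    have hdisj : Disjoint (X ⁻¹' Iic q) B :=
      disjoint_left.2 fun ω (h : X ω ≤ q) (h' : ω ∈ B) => not_le.2 h'.1 h
    have hsum : μ (X ⁻¹' Iic q) + μ B ≤ μ (X ⁻¹' Iic q) + 0 := by
      rw [← measure_union' hdisj (hX measurableSet_Iic), add_zero,
        ← Measure.map_apply hX measurableSet_Iic, ← ofReal_cdf]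
      exact (measure_mono (union_subset (fun ω h => F.mono h) fun ω h => h.2)).trans
        (measure_cdf_comp_le_le hX hV hVunif hindep (F q))
    have hB : μ B = 0 :=
      nonpos_iff_eq_zero.1 (ENNReal.le_of_add_le_add_left (measure_ne_top _ _) hsum)
    refine ae_iff.2 (measure_mono_null (fun ω hω => ?_) hB)
    show q < X ω ∧ F (X ω) ≤ F q
    simpa only [mem_ofPred_eq, Classical.not_imp, not_lt] using hω
  have hrat : ∀ᵐ ω ∂μ, ∀ q : ℚ, (q : ℝ) < X ω → F q < F (X ω) :=
    ae_all_iff.2 fun q => hflat q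
  filter_upwards [hrat] with ω hω y hy
  obtain ⟨q, hyq, hqX⟩ := exists_rat_btwn hy
  exact (F.mono hyq.le).trans_lt (hω q hqX)

lemma ae_eq_sInf_distributionalTransform_le_cdf [IsProbabilityMeasure μ] (hX : Measurable X)
    (hV : Measurable V) (hVunif : μ.map V = volume.restrict (Icc 0 1)) (hindep : IndepFun X V μ) :
    ∀ᵐ ω ∂μ, X ω =
      sInf {x | distributionalTransform (cdf (μ.map X)) (X ω) (V ω) ≤ cdf (μ.map X) x} := by
  set F := cdf (μ.map X)
  filter_upwards [ae_mem_Ioc_of_map_eq_volume_restrict_Icc hV hVunif,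
    ae_cdf_lt_cdf_of_lt hX hV hVunif hindep] with ω hω hstrict
  symm
  refine IsLeast.csInf_eq ⟨F.mono.distributionalTransform_le hω.2,
    fun y hy => le_of_not_gt fun hyX => ?_⟩
  exact (F.mono.lt_distributionalTransform hω.1 hyX (hstrict y hyX)).not_ge hy

end ProbabilityTheory

theorem stmt15 {Ω : Type*} {F : MeasurableSpace Ω} (μ : Measure Ω) [IsProbabilityMeasure μ]
    (X V : Ω → ℝ) (hX : Measurable X) (hV : Measurable V)
    (hVunif : Measure.map V μ = volume.restrict (Set.Icc (0 : ℝ) 1))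
    (hindep : IndepFun X V μ)
    (Fdf G : ℝ → ℝ)
    (hF : ∀ x, Fdf x = (μ {ω | X ω ≤ x}).toReal)
    (hG : ∀ x, Filter.Tendsto Fdf (nhdsWithin x (Set.Iio x)) (nhds (G x)))
    (U : Ω → ℝ) (hU : ∀ ω, U ω = G (X ω) + V ω * (Fdf (X ω) - G (X ω))) :
    Measure.map U μ = volume.restrict (Set.Icc (0 : ℝ) 1) ∧
    ∀ᵐ ω ∂μ, X ω = sInf {x : ℝ | U ω ≤ Fdf x} := by
  have := Measure.isProbabilityMeasure_map (μ := μ) hX.aemeasurable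
  have hFcdf : Fdf = cdf (μ.map X) := funext fun x => by
    rw [hF, cdf_eq_real, measureReal_def, Measure.map_apply hX measurableSet_Iic]
    rfl
  subst hFcdf
  have hGleft : G = leftLim (cdf (μ.map X)) :=
    funext fun x => tendsto_nhds_unique (hG x) ((cdf _).mono.tendsto_leftLim x)
  subst hGleft
  have hUdt : U = fun ω => distributionalTransform (cdf (μ.map X)) (X ω) (V ω) := funext hU
  subst hUdt
  exact ⟨map_distributionalTransform_cdf hX hV hVunif hindep,
    ae_eq_sInf_distributionalTransform_le_cdf hX hV hVunif hindep⟩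
end
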